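/- arXiv:1712.06356 — 2 statements merged into one kernel-verified Lean document; each statement's English description precedes it below -/
import Mathlib

section
/- Let 𝒜 be a finite set of N×N real matrices such that for every sequence {Aₙ} with Aₙ ∈ 𝒜 the products satisfy ‖Aₙ⋯A₁‖ → 0 as n → ∞. Then there exist constants C > 0 and λ ∈ (0,1) such that ‖Aₙ⋯A₁‖ ≤ Cλⁿ for all n ≥ 1 and all sequences {Aₙ ∈ 𝒜}. -/
def prodSq {N : ℕ} (A : ℕ → Matrix (Fin N) (Fin N) ℝ) : ℕ → Matrix (Fin N) (Fin N) ℝ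
  | 0 => 1
  | n + 1 => A (n + 1) * prodSq A n

lemma prodSq_congr {N : ℕ} {A B : ℕ → Matrix (Fin N) (Fin N) ℝ} {n : ℕ}
    (h : ∀ k ≤ n, A k = B k) : prodSq A n = prodSq B n := by
  induction n with
  | zero => rfl
  | succ m ih =>
    simp only [prodSq, h (m+1) le_rfl, ih (fun k hk => h k (by omega))]

lemma prodSq_add {N : ℕ} (A : ℕ → Matrix (Fin N) (Fin N) ℝ) (n m : ℕ) :
    prodSq A (n + m) = prodSq (fun j => A (j + n)) m * prodSq A n := by
  induction m with
  | zero => simp [prodSq]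
  | succ k ih =>
    show prodSq A (n + k + 1) = _
    rw [show n + k + 1 = (n+k) + 1 from rfl]
    simp only [prodSq, ih]
    rw [show k + 1 + n = n + k + 1 by omega]
    rw [Matrix.mul_assoc]

theorem stmt_0 (N : ℕ) (ν : Matrix (Fin N) (Fin N) ℝ → ℝ)
    (hnonneg : ∀ X, 0 ≤ ν X) (hzero : ∀ X, ν X = 0 ↔ X = 0)
    (htri : ∀ X Y, ν (X + Y) ≤ ν X + ν Y)
    (hsmul : ∀ (c : ℝ) (X), ν (c • X) = |c| * ν X)
    (hsub : ∀ X Y, ν (X * Y) ≤ ν X * ν Y)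
    (𝒜 : Finset (Matrix (Fin N) (Fin N) ℝ))
    (hconv : ∀ A : ℕ → Matrix (Fin N) (Fin N) ℝ, (∀ n, A n ∈ 𝒜) →
      Filter.Tendsto (fun n => ν (prodSq A n)) Filter.atTop (nhds 0)) :
    ∃ C > 0, ∃ lam : ℝ, 0 < lam ∧ lam < 1 ∧
      ∀ A : ℕ → Matrix (Fin N) (Fin N) ℝ, (∀ n, A n ∈ 𝒜) →
        ∀ n, 1 ≤ n → ν (prodSq A n) ≤ C * lam ^ n := by
  classical
  -- Step 1: uniformity
  have step1 : ∃ M : ℕ, 1 ≤ M ∧ ∀ A : ℕ → Matrix (Fin N) (Fin N) ℝ, (∀ n, A n ∈ 𝒜) →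
      ∃ k, 1 ≤ k ∧ k ≤ M ∧ ν (prodSq A k) < 1/2 := by
    by_contra hcon
    push_neg at hcon
    -- for each M ≥ 1 there's a bad sequence
    have hbad : ∀ M : ℕ, ∃ A : ℕ → Matrix (Fin N) (Fin N) ℝ, (∀ n, A n ∈ 𝒜) ∧
        ∀ k, 1 ≤ k → k ≤ M → 1/2 ≤ ν (prodSq A k) := by
      intro M
      obtain ⟨A, hA, hk⟩ := hcon (M + 1) (by omega)
      exact ⟨A, hA, fun k h1 h2 => hk k h1 (by omega)⟩
    set S := {x : Matrix (Fin N) (Fin N) ℝ // x ∈ 𝒜}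
    set X := ℕ → S
    have hfin : Finite S := by unfold S; infer_instance
    set C : ℕ → Set X := fun M => {A : X | ∀ k, 1 ≤ k → k ≤ M →
      1/2 ≤ ν (prodSq (fun j => (A j : Matrix (Fin N) (Fin N) ℝ)) k)} with hC
    have hnonemptyC : ∀ M, (C M).Nonempty := by
      intro M
      obtain ⟨A, hA, hb⟩ := hbad M
      exact ⟨fun n => ⟨A n, hA n⟩, fun k h1 h2 => hb k h1 h2⟩
    have hclosedC : ∀ M, IsClosed (C M) := by
      intro M
      have : C M = ⋂ k ∈ Set.Icc 1 M, {A : X | 1/2 ≤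
          ν (prodSq (fun j => (A j : Matrix (Fin N) (Fin N) ℝ)) k)} := by
        ext A
        simp only [Set.mem_iInter, Set.mem_setOf_eq, Set.mem_Icc, hC]
        constructor
        · intro h k hk; exact h k hk.1 hk.2
        · intro h k h1 h2; exact h k ⟨h1, h2⟩
      rw [this]
      refine isClosed_biInter (fun k _ => ?_)
      -- the set depends only on coordinates ≤ k
      set π : X → (Fin (k+1) → S) := fun A i => A i with hπ
      have hπc : Continuous π := continuous_pi (fun i => continuous_apply _)
      set T : Set (Fin (k+1) → S) := {f | 1/2 ≤
        ν (prodSq (fun j => if h : j < k + 1 then (f ⟨j, h⟩ : Matrix (Fin N) (Fin N) ℝ) else 0) k)}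
      have heq : {A : X | 1/2 ≤
          ν (prodSq (fun j => (A j : Matrix (Fin N) (Fin N) ℝ)) k)} = π ⁻¹' T := by
        ext A
        simp only [Set.mem_setOf_eq, Set.mem_preimage, T, hπ]
        have : prodSq (fun j => if h : j < k + 1 then
            ((A (⟨j, h⟩ : Fin (k+1)) : Matrix (Fin N) (Fin N) ℝ)) else 0) k
            = prodSq (fun j => (A j : Matrix (Fin N) (Fin N) ℝ)) k := by
          apply prodSq_congr
          intro j hj
          rw [dif_pos (by omega : j < k + 1)]
        rw [this]
      rw [heq]
      exact (isClosed_discrete T).preimage hπc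
    obtain ⟨A, hAmem⟩ := IsCompact.nonempty_iInter_of_sequence_nonempty_isCompact_isClosed C
      (fun i A hA k h1 h2 => hA k h1 (by omega)) hnonemptyC
      ((hclosedC 0).isCompact) hclosedC
    simp only [Set.mem_iInter] at hAmem
    set A' : ℕ → Matrix (Fin N) (Fin N) ℝ := fun n => (A n : Matrix (Fin N) (Fin N) ℝ)
    have hA' : ∀ n, A' n ∈ 𝒜 := fun n => (A n).2
    have := hconv A' hA'
    have hev : ∀ᶠ n in Filter.atTop, ν (prodSq A' n) < 1/2 :=
      this.eventually_lt_const (by norm_num)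
    obtain ⟨n, hn1, hn2⟩ := (hev.and (Filter.eventually_ge_atTop 1)).exists
    exact absurd (hAmem n n hn2 le_rfl) (not_le.mpr hn1)
  obtain ⟨M, hM1, hM⟩ := step1
  -- Step 2
  set R : ℝ := max 1 (max (ν 1) (if h : 𝒜.Nonempty then 𝒜.sup' h ν else 0)) with hR
  have hR1 : (1:ℝ) ≤ R := le_max_left _ _
  have hRν1 : ν 1 ≤ R := le_trans (le_max_left _ _) (le_max_right _ _)
  have hRa : ∀ a ∈ 𝒜, ν a ≤ R := by
    intro a ha
    have h𝒜 : 𝒜.Nonempty := ⟨a, ha⟩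
    have : ν a ≤ 𝒜.sup' h𝒜 ν := Finset.le_sup' ν ha
    calc ν a ≤ 𝒜.sup' h𝒜 ν := this
      _ ≤ R := by rw [hR, dif_pos h𝒜]; exact le_trans (le_max_right _ _) (le_max_right _ _)
  -- crude bound
  have hcrude : ∀ (A : ℕ → Matrix (Fin N) (Fin N) ℝ), (∀ n, A n ∈ 𝒜) →
      ∀ n, ν (prodSq A n) ≤ R ^ (n + 1) := by
    intro A hA n
    induction n with
    | zero => simpa [prodSq] using hRν1
    | succ m ih =>
      calc ν (prodSq A (m+1)) ≤ ν (A (m+1)) * ν (prodSq A m) := hsub _ _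
        _ ≤ R * R ^ (m+1) := by
            apply mul_le_mul (hRa _ (hA _)) ih (hnonneg _) (le_trans zero_le_one hR1)
        _ = R ^ (m + 1 + 1) := by ring
  set lam : ℝ := (2:ℝ) ^ (-(1:ℝ)/M) with hlam
  have hlampos : 0 < lam := Real.rpow_pos_of_pos (by norm_num) _
  have hlamlt1 : lam < 1 := by
    rw [hlam]
    apply Real.rpow_lt_one_of_one_lt_of_neg (by norm_num)
    have : (0:ℝ) < M := by exact_mod_cast hM1
    exact div_neg_of_neg_of_pos (by norm_num) this
  have hlamM : lam ^ M = 1/2 := by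
    rw [hlam, ← Real.rpow_natCast ((2:ℝ) ^ (-(1:ℝ)/M)) M, ← Real.rpow_mul (by norm_num)]
    have hMne : (M:ℝ) ≠ 0 := by positivity
    rw [div_mul_cancel₀ _ hMne]
    norm_num [Real.rpow_neg_one]
  have hlamle : ∀ k ≤ M, (1:ℝ)/2 ≤ lam ^ k := by
    intro k hk
    rw [← hlamM]
    exact pow_le_pow_of_le_one (le_of_lt hlampos) (le_of_lt hlamlt1) hk
  set K : ℝ := 2 * R ^ (M + 1) with hK
  have hKpos : 0 < K := by positivity
  refine ⟨K, hKpos, lam, hlampos, hlamlt1, ?_⟩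
  -- main claim by strong induction, for all n (including 0)
  have main : ∀ n, ∀ (A : ℕ → Matrix (Fin N) (Fin N) ℝ), (∀ m, A m ∈ 𝒜) →
      ν (prodSq A n) ≤ K * lam ^ n := by
    intro n
    induction n using Nat.strong_induction_on with
    | _ n ih =>
      intro A hA
      by_cases hn : n ≤ M
      · calc ν (prodSq A n) ≤ R ^ (n + 1) := hcrude A hA n
          _ ≤ R ^ (M + 1) := pow_le_pow_right₀ hR1 (by omega)
          _ = K * (1/2) := by rw [hK]; ring
          _ ≤ K * lam ^ n := by
              apply mul_le_mul_of_nonneg_left (hlamle n hn) (le_of_lt hKpos)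
      · push_neg at hn
        obtain ⟨k, hk1, hkM, hksmall⟩ := hM A hA
        have hkn : k ≤ n := le_trans hkM (le_of_lt hn)
        have hsplit : prodSq A n = prodSq (fun j => A (j + k)) (n - k) * prodSq A k := by
          have h := prodSq_add A k (n - k)
          rwa [show k + (n - k) = n by omega] at h
        have hshift : ∀ m, (fun j => A (j + k)) m ∈ 𝒜 := fun m => hA _
        calc ν (prodSq A n) ≤ ν (prodSq (fun j => A (j + k)) (n - k)) * ν (prodSq A k) := by
              rw [hsplit]; exact hsub _ _
          _ ≤ (K * lam ^ (n - k)) * (1/2) := by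
              apply mul_le_mul (ih (n - k) (by omega) _ hshift) (le_of_lt hksmall)
                (hnonneg _) (by positivity)
          _ ≤ (K * lam ^ (n - k)) * lam ^ k := by
              apply mul_le_mul_of_nonneg_left (hlamle k hkM) (by positivity)
          _ = K * lam ^ n := by
              rw [mul_assoc, ← pow_add]
              congr 2; omega
  exact fun A hA n _ => main n A hA
end

section
/- Let 𝒜 be a finite set of N×N real matrices such that for every sequence {Aₙ ∈ 𝒜} the sequence of norms {‖Aₙ⋯A₁‖ : n ≥ 1} is bounded. Then these norms are uniformly bounded: there exists C > 0 such that ‖Aₙ⋯A₁‖ ≤ C for all n ≥ 1 and all sequences {Aₙ ∈ 𝒜}. -/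
namespace Stmt12Aux

open Classical

variable {N : ℕ}

abbrev Mat (N : ℕ) := Matrix (Fin N) (Fin N) ℝ

/-- the list of letters, latest first, used up to time n -/
def wordList (A : ℕ → Mat N) (n : ℕ) : List (Mat N) := (List.range n).map (fun i => A (n - i))

lemma wordList_succ (A : ℕ → Mat N) (n : ℕ) :
    wordList A (n + 1) = A (n + 1) :: wordList A n := by
  unfold wordList
  rw [List.range_succ_eq_map, List.map_cons, List.map_map]
  simp only [Nat.sub_zero]
  congr 1
  apply List.map_congr_left
  intro i _
  simp [Function.comp, Nat.succ_sub_succ]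

lemma prodSq_eq_wordList (A : ℕ → Mat N) (n : ℕ) :
    prodSq A n = (wordList A n).prod := by
  induction n with
  | zero => simp [prodSq, wordList]
  | succ n ih => rw [prodSq, wordList_succ, List.prod_cons, ih]

def isWord (𝒜 : Finset (Mat N)) (l : List (Mat N)) : Prop := ∀ x ∈ l, x ∈ 𝒜

def Good (ν : Mat N → ℝ) (𝒜 : Finset (Mat N)) (X : Mat N) : Prop :=
  ∃ c : ℝ, ∀ l : List (Mat N), isWord 𝒜 l → ν (l.prod * X) ≤ c

lemma nu_sum (ν : Mat N → ℝ) (h0 : ν (0 : Mat N) = 0)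
    (htri : ∀ X Y : Mat N, ν (X + Y) ≤ ν X + ν Y)
    {ι : Type*} (s : Finset ι) (f : ι → Mat N) :
    ν (∑ i ∈ s, f i) ≤ ∑ i ∈ s, ν (f i) := by
  classical
  induction s using Finset.cons_induction with
  | empty => simp [h0]
  | cons a s ha ih =>
      rw [Finset.sum_cons, Finset.sum_cons]
      exact le_trans (htri _ _) (by linarith)

/-- the submodule of matrices with uniformly bounded orbit under left word-multiplication -/
def goodSub (ν : Mat N → ℝ) (𝒜 : Finset (Mat N))
    (h0 : ν (0 : Mat N) = 0)
    (htri : ∀ X Y : Mat N, ν (X + Y) ≤ ν X + ν Y)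
    (hsmul : ∀ (c : ℝ) (X : Mat N), ν (c • X) = |c| * ν X) : Submodule ℝ (Mat N) where
  carrier := {X | Good ν 𝒜 X}
  zero_mem' := ⟨0, fun l _ => by simp [mul_zero, h0]⟩
  add_mem' := by
    rintro X Y ⟨c, hc⟩ ⟨d, hd⟩
    exact ⟨c + d, fun l hl => by
      rw [mul_add]
      exact le_trans (htri _ _) (add_le_add (hc l hl) (hd l hl))⟩
  smul_mem' := by
    rintro c X ⟨d, hd⟩
    refine ⟨|c| * d, fun l hl => ?_⟩
    rw [mul_smul_comm, hsmul]
    exact mul_le_mul_of_nonneg_left (hd l hl) (abs_nonneg c)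

/-- Key uniformity lemma: a single constant works for all Good matrices. -/
lemma good_uniform (ν : Mat N → ℝ) (𝒜 : Finset (Mat N))
    (hnonneg : ∀ X : Mat N, 0 ≤ ν X) (hzero : ∀ X : Mat N, ν X = 0 ↔ X = 0)
    (htri : ∀ X Y : Mat N, ν (X + Y) ≤ ν X + ν Y)
    (hsmul : ∀ (c : ℝ) (X : Mat N), ν (c • X) = |c| * ν X) :
    ∃ Cu : ℝ, 0 ≤ Cu ∧
    ∀ X : Mat N, Good ν 𝒜 X → ∀ l : List (Mat N), isWord 𝒜 l →
      ν (l.prod * X) ≤ Cu * ν X := by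
  classical
  have h0 : ν (0 : Mat N) = 0 := (hzero 0).2 rfl
  set U := goodSub ν 𝒜 h0 htri hsmul with hU
  haveI : FiniteDimensional ℝ (Mat N) := by infer_instance
  set r := Module.finrank ℝ U with hr
  set b : Module.Basis (Fin r) ℝ U := Module.finBasis ℝ U with hb
  have hgood : ∀ i : Fin r, Good ν 𝒜 ((b i : Mat N)) := fun i => (b i).2
  choose c hc using hgood
  have hc0 : ∀ i, 0 ≤ c i := by
    intro i
    exact le_trans (hnonneg _) (hc i [] (by intro x hx; simp at hx))
  by_cases hr0 : r = 0
  · -- U is trivial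
    refine ⟨0, le_rfl, fun X hX l hl => ?_⟩
    have hXU : (⟨X, hX⟩ : U) = 0 := by
      have hrep := b.sum_equivFun ⟨X, hX⟩
      rw [← hrep]
      haveI : IsEmpty (Fin r) := by
        rw [hr0]
        infer_instance
      simp [Finset.univ_eq_empty]
    have hX0 : X = 0 := congrArg Subtype.val hXU
    simp [hX0, mul_zero, h0]
  -- nontrivial case : compactness of the sphere in coordinates
  have hνdiff : ∀ X Y : Mat N, ν X ≤ ν Y + ν (X - Y) := by
    intro X Y
    have := htri Y (X - Y)
    simpa using this
  set g : (Fin r → ℝ) → ℝ := fun t => ν (∑ i, t i • (b i : Mat N)) with hg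
  have hglin : ∀ t s : Fin r → ℝ, |g t - g s| ≤ (∑ i, ν (b i : Mat N)) * dist t s := by
    have key : ∀ t s : Fin r → ℝ, g t - g s ≤ (∑ i, ν (b i : Mat N)) * dist t s := by
      intro t s
      have h1 : g t ≤ g s + ν (∑ i, (t i - s i) • (b i : Mat N)) := by
        have hd := hνdiff (∑ i, t i • (b i : Mat N)) (∑ i, s i • (b i : Mat N))
        have heq : (∑ i, t i • (b i : Mat N)) - (∑ i, s i • (b i : Mat N))
            = ∑ i, (t i - s i) • (b i : Mat N) := by
          rw [← Finset.sum_sub_distrib]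
          congr 1; funext i; rw [sub_smul]
        rw [heq] at hd
        exact hd
      have h2 : ν (∑ i, (t i - s i) • (b i : Mat N)) ≤ (∑ i, ν (b i : Mat N)) * dist t s := by
        refine le_trans (nu_sum ν h0 htri _ _) ?_
        rw [Finset.sum_mul]
        apply Finset.sum_le_sum
        intro i _
        rw [hsmul, mul_comm]
        have hle : |t i - s i| ≤ dist t s := by
          rw [← Real.dist_eq]
          exact dist_le_pi_dist t s i
        exact mul_le_mul_of_nonneg_left hle (hnonneg _)
      linarith
    intro t s
    rw [abs_sub_le_iff]
    refine ⟨key t s, ?_⟩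
    have := key s t
    rwa [dist_comm] at this
  have hgcont : Continuous g := by
    have hlip : LipschitzWith (Real.toNNReal (∑ i, ν (b i : Mat N))) g := by
      apply LipschitzWith.of_dist_le_mul
      intro t s
      rw [Real.dist_eq]
      refine le_trans (hglin t s) ?_
      apply mul_le_mul_of_nonneg_right _ dist_nonneg
      exact Real.le_coe_toNNReal _
    exact hlip.continuous
  haveI : Nonempty (Fin r) := ⟨⟨0, Nat.pos_of_ne_zero hr0⟩⟩
  have hsne : (Metric.sphere (0 : Fin r → ℝ) 1).Nonempty :=
    NormedSpace.sphere_nonempty.2 zero_le_one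
  obtain ⟨t0, ht0, hmin⟩ := (isCompact_sphere (0 : Fin r → ℝ) 1).exists_isMinOn hsne
    hgcont.continuousOn
  set δ := g t0 with hδ
  have ht0n : ‖t0‖ = 1 := by
    rw [Metric.mem_sphere, dist_zero_right] at ht0
    exact ht0
  have hδpos : 0 < δ := by
    rcases lt_or_eq_of_le (hnonneg (∑ i, t0 i • (b i : Mat N))) with h | h
    · exact h
    · exfalso
      have hzero' : (∑ i, t0 i • (b i : Mat N)) = 0 := (hzero _).1 h.symm
      have hsum : (∑ i, t0 i • b i : U) = 0 := by
        apply Subtype.coe_injective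
        push_cast
        simpa using hzero'
      have hind := Fintype.linearIndependent_iff.1 b.linearIndependent t0 hsum
      have ht00 : t0 = 0 := funext hind
      rw [ht00, norm_zero] at ht0n
      exact one_ne_zero ht0n.symm
  -- scaling bound: δ * ‖t‖ ≤ g t
  have hscale : ∀ t : Fin r → ℝ, δ * ‖t‖ ≤ g t := by
    intro t
    by_cases ht : t = 0
    · simp [ht, hg, h0]
    · have htn : ‖t‖ ≠ 0 := by simpa using ht
      have htpos : 0 < ‖t‖ := lt_of_le_of_ne (norm_nonneg t) (Ne.symm htn)
      set t' : Fin r → ℝ := ‖t‖⁻¹ • t with ht'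
      have ht's : t' ∈ Metric.sphere (0 : Fin r → ℝ) 1 := by
        rw [Metric.mem_sphere, dist_zero_right, ht', norm_smul]
        simp [abs_of_pos (inv_pos.2 htpos), inv_mul_cancel₀ htn]
      have hgt' : δ ≤ g t' := hmin ht's
      have hfactor : g t = ‖t‖ * g t' := by
        rw [hg]
        simp only
        have hsum : (∑ i, t i • (b i : Mat N)) = ‖t‖ • ∑ i, t' i • (b i : Mat N) := by
          rw [Finset.smul_sum]
          congr 1; funext i
          rw [smul_smul, ht']
          simp only [Pi.smul_apply, smul_eq_mul]
          rw [← mul_assoc, mul_inv_cancel₀ htn, one_mul]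
        rw [hsum, hsmul, abs_of_pos htpos]
      rw [hfactor]
      calc δ * ‖t‖ = ‖t‖ * δ := by ring
        _ ≤ ‖t‖ * g t' := mul_le_mul_of_nonneg_left hgt' (le_of_lt htpos)
  refine ⟨(∑ i, c i) / δ, div_nonneg (Finset.sum_nonneg fun i _ => hc0 i) hδpos.le, fun X hX l hl => ?_⟩
  set t : Fin r → ℝ := b.equivFun ⟨X, hX⟩ with ht
  have hXrep : X = ∑ i, t i • (b i : Mat N) := by
    have hrep := congrArg Subtype.val (b.sum_equivFun ⟨X, hX⟩)
    push_cast at hrep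
    rw [← hrep]
  have hgt : g t = ν X := by rw [hg]; simp only; rw [← hXrep]
  have htnorm : ‖t‖ ≤ ν X / δ := by
    rw [le_div_iff₀ hδpos]
    calc ‖t‖ * δ = δ * ‖t‖ := by ring
      _ ≤ g t := hscale t
      _ = ν X := hgt
  calc ν (l.prod * X) = ν (∑ i, t i • (l.prod * (b i : Mat N))) := by
        rw [hXrep, Finset.mul_sum]
        simp only [mul_smul_comm]
    _ ≤ ∑ i, ν (t i • (l.prod * (b i : Mat N))) := nu_sum ν h0 htri _ _
    _ ≤ ∑ i, ‖t‖ * c i := by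
        apply Finset.sum_le_sum
        intro i _
        rw [hsmul]
        have h1 : |t i| ≤ ‖t‖ := by
          have := norm_le_pi_norm t i
          simpa using this
        exact mul_le_mul h1 (hc i l hl) (hnonneg _) (norm_nonneg t)
    _ = ‖t‖ * ∑ i, c i := by rw [← Finset.mul_sum]
    _ ≤ (ν X / δ) * ∑ i, c i :=
        mul_le_mul_of_nonneg_right htnorm (Finset.sum_nonneg (fun i _ => hc0 i))
    _ = (∑ i, c i) / δ * ν X := by ring

/-- if X is bad then some one-letter extension is bad -/
lemma bad_step (ν : Mat N → ℝ) (𝒜 : Finset (Mat N))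
    (hnonneg : ∀ X : Mat N, 0 ≤ ν X)
    (X : Mat N) (hX : ¬ Good ν 𝒜 X) :
    ∃ a, a ∈ 𝒜 ∧ ¬ Good ν 𝒜 (a * X) := by
  classical
  by_contra h
  push_neg at h
  have hgood : ∀ a ∈ 𝒜, Good ν 𝒜 (a * X) := fun a ha => h a ha
  apply hX
  have hcf : ∀ a : Mat N, ∃ ca : ℝ, 0 ≤ ca ∧
      (a ∈ 𝒜 → ∀ l, isWord 𝒜 l → ν (l.prod * (a * X)) ≤ ca) := by
    intro a
    by_cases ha : a ∈ 𝒜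
    · obtain ⟨ca, hca⟩ := hgood a ha
      refine ⟨max ca 0, le_max_right _ _, fun _ l hl => le_trans (hca l hl) (le_max_left _ _)⟩
    · exact ⟨0, le_rfl, fun h' => absurd h' ha⟩
  choose f hf0 hf using hcf
  refine ⟨max (ν X) (∑ a ∈ 𝒜, f a), fun l hl => ?_⟩
  induction l using List.reverseRecOn with
  | nil => simp [le_max_iff]
  | append_singleton l' a _ =>
      have ha : a ∈ 𝒜 := hl a (by simp)
      have hl' : isWord 𝒜 l' := fun x hx => hl x (by simp [hx])
      have hsplit : (l' ++ [a]).prod * X = l'.prod * (a * X) := by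
        rw [List.prod_append, List.prod_singleton, mul_assoc]
      rw [hsplit]
      refine le_trans (hf a ha l' hl') (le_trans ?_ (le_max_right _ _))
      exact Finset.single_le_sum (fun bb _ => hf0 bb) ha

theorem main (ν : Mat N → ℝ) (𝒜 : Finset (Mat N))
    (hnonneg : ∀ X : Mat N, 0 ≤ ν X) (hzero : ∀ X : Mat N, ν X = 0 ↔ X = 0)
    (htri : ∀ X Y : Mat N, ν (X + Y) ≤ ν X + ν Y)
    (hsmul : ∀ (c : ℝ) (X : Mat N), ν (c • X) = |c| * ν X)
    (hsub : ∀ X Y : Mat N, ν (X * Y) ≤ ν X * ν Y)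
    (hbdd : ∀ A : ℕ → Mat N, (∀ n, A n ∈ 𝒜) →
      ∃ c : ℝ, ∀ n, 1 ≤ n → ν (prodSq A n) ≤ c) :
    ∃ C > 0, ∀ A : ℕ → Mat N, (∀ n, A n ∈ 𝒜) →
      ∀ n, 1 ≤ n → ν (prodSq A n) ≤ C := by
  classical
  obtain ⟨Cu, hCu0, hCu⟩ := good_uniform ν 𝒜 hnonneg hzero htri hsmul
  -- main claim : Good 1
  have hG1 : Good ν 𝒜 (1 : Mat N) := by
    by_contra h1
    obtain ⟨a0, ha0, _⟩ := bad_step ν 𝒜 hnonneg (1 : Mat N) h1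
    by_cases hcase : ∃ u₀ : List (Mat N), isWord 𝒜 u₀ ∧ ¬ Good ν 𝒜 u₀.prod ∧
        ∃ m : ℝ, ∀ v : List (Mat N), isWord 𝒜 v → ¬ Good ν 𝒜 ((v ++ u₀).prod) →
          ν ((v ++ u₀).prod) ≤ m
    · -- Case 1 : bounded bad subtree above u₀ ⇒ u₀ is Good, contradiction
      obtain ⟨u₀, hu₀w, hu₀b, m, hm⟩ := hcase
      set K := ∑ bb ∈ 𝒜, ν bb with hK
      have hm0 : 0 ≤ m :=
        le_trans (hnonneg _) (hm [] (by intro x hx; simp at hx) (by simpa using hu₀b))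
      have hdec : ∀ w : List (Mat N), isWord 𝒜 w →
          (¬ Good ν 𝒜 ((w ++ u₀).prod)) ∨
          (∃ v a s, w = v ++ a :: s ∧ a ∈ 𝒜 ∧ isWord 𝒜 s ∧
            ¬ Good ν 𝒜 ((s ++ u₀).prod) ∧ Good ν 𝒜 ((a :: (s ++ u₀)).prod)) := by
        intro w hw
        induction w with
        | nil => left; simpa using hu₀b
        | cons bb w' ih =>
            have hw' : isWord 𝒜 w' := fun x hx => hw x (by simp [hx])
            have hbb : bb ∈ 𝒜 := hw bb (by simp)
            rcases ih hw' with hbad | ⟨v, a, s, heq, ha, hs, hsbad, hsgood⟩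
            · by_cases hg : Good ν 𝒜 (((bb :: w') ++ u₀).prod)
              · right
                exact ⟨[], bb, w', by simp, hbb, hw', hbad, by simpa using hg⟩
              · left; exact hg
            · right
              exact ⟨bb :: v, a, s, by rw [heq]; simp, ha, hs, hsbad, hsgood⟩
      set Cstar := max m (Cu * (K * m)) with hCstar
      have hbound : ∀ w : List (Mat N), isWord 𝒜 w → ν ((w ++ u₀).prod) ≤ Cstar := by
        intro w hw
        rcases hdec w hw with hbad | ⟨v, a, s, heq, ha, hs, hsbad, hsgood⟩
        · exact le_trans (hm w hw hbad) (le_max_left _ _)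
        · have hv : isWord 𝒜 v := by
            intro x hx
            exact hw x (by rw [heq]; simp [hx])
          have hsplit : (w ++ u₀).prod = v.prod * ((a :: (s ++ u₀)).prod) := by
            rw [heq, List.append_assoc, List.cons_append, List.prod_append]
          rw [hsplit]
          refine le_trans (hCu _ hsgood v hv) (le_trans ?_ (le_max_right _ _))
          apply mul_le_mul_of_nonneg_left _ hCu0
          rw [List.prod_cons]
          refine le_trans (hsub _ _) ?_
          have h1 : ν a ≤ K := Finset.single_le_sum (fun bb _ => hnonneg bb) ha
          have h2 : ν ((s ++ u₀).prod) ≤ m := hm s hs hsbad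
          exact mul_le_mul h1 h2 (hnonneg _) (le_trans (hnonneg a) h1)
      exact hu₀b ⟨Cstar, fun l hl => by rw [← List.prod_append]; exact hbound l hl⟩
    · -- Case 2 : build a sequence with unbounded partial products
      push_neg at hcase
      have hstep : ∀ u : List (Mat N), isWord 𝒜 u → ¬ Good ν 𝒜 u.prod →
          ∀ m : ℝ, ∃ v : List (Mat N), isWord 𝒜 v ∧ ¬ Good ν 𝒜 ((v ++ u).prod) ∧
            m < ν ((v ++ u).prod) := by
        intro u hu hub m
        obtain ⟨v, hv, hvb, hvm⟩ := hcase u hu hub m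
        exact ⟨v, hv, hvb, hvm⟩
      have hroot : isWord 𝒜 ([] : List (Mat N)) ∧ ¬ Good ν 𝒜 ([] : List (Mat N)).prod := by
        constructor
        · intro x hx; simp at hx
        · simpa using h1
      have hnext : ∀ (u : {l : List (Mat N) // isWord 𝒜 l ∧ ¬ Good ν 𝒜 l.prod}) (k : ℕ),
          ∃ w : {l : List (Mat N) // isWord 𝒜 l ∧ ¬ Good ν 𝒜 l.prod},
          (u : List (Mat N)) <:+ (w : List (Mat N)) ∧
          (k : ℝ) + 1 < ν ((w : List (Mat N)).prod) ∧
          ν ((u : List (Mat N)).prod) < ν ((w : List (Mat N)).prod) := by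
        rintro ⟨u, hu, hub⟩ k
        obtain ⟨v, hv, hvb, hvm⟩ := hstep u hu hub (max ((k : ℝ) + 1) (ν u.prod))
        refine ⟨⟨v ++ u, ?_, hvb⟩, List.suffix_append v u, ?_, ?_⟩
        · intro x hx
          rcases List.mem_append.1 hx with h | h
          · exact hv x h
          · exact hu x h
        · exact lt_of_le_of_lt (le_max_left _ _) hvm
        · exact lt_of_le_of_lt (le_max_right _ _) hvm
      choose nextf hsfx hgt hmono using hnext
      set u : ℕ → {l : List (Mat N) // isWord 𝒜 l ∧ ¬ Good ν 𝒜 l.prod} :=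
        fun k => Nat.rec ⟨[], hroot⟩ (fun k prev => nextf prev k) k with hu
      have hu0 : (u 0 : List (Mat N)) = [] := rfl
      have husucc : ∀ k, u (k + 1) = nextf (u k) k := fun k => rfl
      have hsuffix : ∀ j k, j ≤ k → (u j : List (Mat N)) <:+ (u k : List (Mat N)) := by
        intro j k hjk
        induction k with
        | zero =>
            have : j = 0 := Nat.le_zero.1 hjk
            rw [this]
        | succ k ih =>
            rcases Nat.lt_or_ge j (k + 1) with h | h
            · exact List.IsSuffix.trans (ih (Nat.lt_succ_iff.1 h))
                (by rw [husucc]; exact hsfx (u k) k)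
            · have hjeq : j = k + 1 := le_antisymm hjk h
              rw [hjeq]
      have hνk : ∀ k : ℕ, (k : ℝ) < ν ((u (k + 1) : List (Mat N)).prod) := by
        intro k
        have h := hgt (u k) k
        rw [← husucc] at h
        linarith
      have hlength : ∀ k, (u k : List (Mat N)).length < (u (k + 1) : List (Mat N)).length := by
        intro k
        have hsf := hsfx (u k) k
        rw [← husucc] at hsf
        rcases lt_or_eq_of_le hsf.length_le with h | h
        · exact h
        · exfalso
          have heq2 : (u k : List (Mat N)) = (u (k + 1) : List (Mat N)) := hsf.eq_of_length h
          have hmm := hmono (u k) k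
          rw [← husucc, ← heq2] at hmm
          exact lt_irrefl _ hmm
      have hLk : ∀ k : ℕ, k ≤ (u k : List (Mat N)).length := by
        intro k
        induction k with
        | zero => simp
        | succ k ih => exact Nat.lt_of_le_of_lt ih (hlength k)
      set A : ℕ → Mat N :=
        fun n => ((u n : List (Mat N)).getD ((u n : List (Mat N)).length - n) a0) with hA
      have hgetD : ∀ (s t : List (Mat N)), s <:+ t → ∀ i, 1 ≤ i → i ≤ s.length →
          t.getD (t.length - i) a0 = s.getD (s.length - i) a0 := by
        rintro s t ⟨w, rfl⟩ i h1 h2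
        rw [List.length_append]
        have harith : w.length + s.length - i = w.length + (s.length - i) := by omega
        rw [harith, List.getD_append_right w s a0 _ (Nat.le_add_right _ _)]
        congr 1
        omega
      have hconsist : ∀ j k n, 1 ≤ n → n ≤ (u j : List (Mat N)).length →
          n ≤ (u k : List (Mat N)).length →
          (u j : List (Mat N)).getD ((u j : List (Mat N)).length - n) a0 =
          (u k : List (Mat N)).getD ((u k : List (Mat N)).length - n) a0 := by
        intro j k n h1 hj hk
        rcases le_total j k with h | h
        · exact (hgetD _ _ (hsuffix j k h) n h1 hj).symm
        · exact hgetD _ _ (hsuffix k j h) n h1 hk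
      have hAmem : ∀ n, A n ∈ 𝒜 := by
        intro n
        rcases Nat.eq_zero_or_pos n with h | h
        · subst h
          show ((u 0 : List (Mat N)).getD _ a0) ∈ 𝒜
          rw [hu0]
          simpa using ha0
        · have hn : n ≤ (u n : List (Mat N)).length := hLk n
          have hidx : (u n : List (Mat N)).length - n < (u n : List (Mat N)).length := by omega
          show ((u n : List (Mat N)).getD _ a0) ∈ 𝒜
          rw [List.getD_eq_getElem _ _ hidx]
          exact (u n).2.1 _ (List.getElem_mem _)
      have hmatch : ∀ k n, n ≤ (u k : List (Mat N)).length →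
          wordList A n = (u k : List (Mat N)).drop ((u k : List (Mat N)).length - n) := by
        intro k n
        induction n with
        | zero =>
            intro _
            simp [wordList]
        | succ n ih =>
            intro hnk
            rw [wordList_succ, ih (by omega)]
            have hidx : (u k : List (Mat N)).length - (n + 1) < (u k : List (Mat N)).length := by
              omega
            rw [List.drop_eq_getElem_cons hidx]
            have harith : (u k : List (Mat N)).length - (n + 1) + 1
                = (u k : List (Mat N)).length - n := by omega
            rw [harith]
            congr 1
            rw [← List.getD_eq_getElem _ a0 hidx]
            show ((u (n+1) : List (Mat N)).getD _ a0) = _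
            exact hconsist (n + 1) k (n + 1) (by omega) (hLk (n + 1)) hnk
      obtain ⟨cb, hcb⟩ := hbdd A hAmem
      set k := Nat.ceil cb + 1 with hk
      have hk1 : 1 ≤ (u k : List (Mat N)).length := le_trans (by omega) (hLk k)
      have heqq : prodSq A ((u k : List (Mat N)).length) = ((u k : List (Mat N))).prod := by
        rw [prodSq_eq_wordList, hmatch k _ le_rfl]
        simp
      have hb1 := hcb ((u k : List (Mat N)).length) hk1
      rw [heqq] at hb1
      have hb2 : ((Nat.ceil cb : ℕ) : ℝ) < ν ((u k : List (Mat N)).prod) := by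
        have := hνk (Nat.ceil cb)
        rw [hk]
        exact this
      have hcbk : cb ≤ ((Nat.ceil cb : ℕ) : ℝ) := Nat.le_ceil cb
      linarith
  -- conclude
  obtain ⟨c, hc⟩ := hG1
  refine ⟨max c 0 + 1, by positivity, fun A hA n hn => ?_⟩
  have hw : isWord 𝒜 (wordList A n) := by
    intro x hx
    rw [wordList] at hx
    obtain ⟨i, _, rfl⟩ := List.mem_map.1 hx
    exact hA _
  have hcl := hc (wordList A n) hw
  rw [mul_one] at hcl
  rw [prodSq_eq_wordList]
  calc ν ((wordList A n).prod) ≤ c := hcl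
    _ ≤ max c 0 + 1 := by
        have := le_max_left c 0
        linarith

end Stmt12Aux

theorem stmt_12 (N : ℕ) (ν : Matrix (Fin N) (Fin N) ℝ → ℝ)
    (hnonneg : ∀ X, 0 ≤ ν X) (hzero : ∀ X, ν X = 0 ↔ X = 0)
    (htri : ∀ X Y, ν (X + Y) ≤ ν X + ν Y)
    (hsmul : ∀ (c : ℝ) (X), ν (c • X) = |c| * ν X)
    (hsub : ∀ X Y, ν (X * Y) ≤ ν X * ν Y)
    (𝒜 : Finset (Matrix (Fin N) (Fin N) ℝ))
    (hbdd : ∀ A : ℕ → Matrix (Fin N) (Fin N) ℝ, (∀ n, A n ∈ 𝒜) →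
      ∃ c : ℝ, ∀ n, 1 ≤ n → ν (prodSq A n) ≤ c) :
    ∃ C > 0, ∀ A : ℕ → Matrix (Fin N) (Fin N) ℝ, (∀ n, A n ∈ 𝒜) →
      ∀ n, 1 ≤ n → ν (prodSq A n) ≤ C := by
  exact Stmt12Aux.main ν 𝒜 hnonneg hzero htri hsmul hsub hbdd
end
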